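/- arXiv:1106.1342 — 3 statements merged into one kernel-verified Lean document; each statement's English description precedes it below -/
import Mathlib

section
/- Let Y be a finite metric space such that every open ball of radius 1 contains at most d elements. Call a subset L ⊂ Y a 1-lattice if any two distinct points of L are at distance ≥ 1 and L is maximal with this property. Then for every v ∈ Y, the number of 1-lattices containing v is at least 2^{-(d-1)} times the total number of 1-lattices in Y. In particular, if a 1-lattice is chosen uniformly at random, the probability that v belongs to it is at least 2^{1-d}. -/
open Classical

/-- in a finite metric space whose open unit balls have at most `d`
elements, any fixed point belongs to at least a `2^{-(d-1)}` fraction of all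
1-lattices (maximal 1-separated subsets). -/
theorem lattice_membership_probability
    (Y : Type*) [MetricSpace Y] [Fintype Y]
    (d : ℕ) (hd : 1 ≤ d)
    (hball : ∀ y : Y, (Finset.univ.filter fun z : Y => dist y z < 1).card ≤ d)
    (IsLattice : Finset Y → Prop)
    (hLat : ∀ L : Finset Y, IsLattice L ↔
      ((∀ x ∈ L, ∀ y ∈ L, x ≠ y → 1 ≤ dist x y) ∧
        ∀ L' : Finset Y, L ⊆ L' → (∀ x ∈ L', ∀ y ∈ L', x ≠ y → 1 ≤ dist x y) → L' = L))
    (v : Y) :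
    (Finset.univ.filter fun L : Finset Y => IsLattice L).card
      ≤ 2 ^ (d - 1) *
        (Finset.univ.filter fun L : Finset Y => IsLattice L ∧ v ∈ L).card := by
  classical
  set sep : Finset Y → Prop := fun L => ∀ x ∈ L, ∀ y ∈ L, x ≠ y → 1 ≤ dist x y with hsep
  have hLat' : ∀ L, IsLattice L ↔ sep L ∧ ∀ L', L ⊆ L' → sep L' → L' = L := hLat
  -- every separated set extends to a maximal one (a lattice)
  have exists_ext : ∀ A : Finset Y, ∃ M : Finset Y, sep A → A ⊆ M ∧ IsLattice M := by
    intro A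
    by_cases hA : sep A
    · obtain ⟨M, hMmem, hMmax⟩ :=
        (Finset.univ.filter fun L : Finset Y => A ⊆ L ∧ sep L).exists_max_image
          Finset.card ⟨A, Finset.mem_filter.mpr ⟨Finset.mem_univ _, Finset.Subset.refl A, hA⟩⟩
      simp only [Finset.mem_filter, Finset.mem_univ, true_and] at hMmem
      refine ⟨M, fun _ => ⟨hMmem.1, ?_⟩⟩
      rw [hLat']
      refine ⟨hMmem.2, fun L' hsub hsepL' => ?_⟩
      have hmem' : L' ∈ Finset.univ.filter fun L : Finset Y => A ⊆ L ∧ sep L :=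
        Finset.mem_filter.mpr ⟨Finset.mem_univ _, hMmem.1.trans hsub, hsepL'⟩
      exact (Finset.eq_of_subset_of_card_le hsub (hMmax L' hmem')).symm
    · exact ⟨∅, fun h => absurd h hA⟩
  choose ext hext using exists_ext
  set B : Finset Y := Finset.univ.filter fun z : Y => dist v z < 1 with hB
  set N : Finset Y := B.erase v with hN
  have hvB : v ∈ B := by simp [hB]
  have hNcard : N.card ≤ d - 1 := by
    have h0 : B.card ≤ d := hball v
    have h1 : N.card = B.card - 1 := by rw [hN, Finset.card_erase_of_mem hvB]
    omega
  set f : Finset Y → Finset Y := fun L => if v ∈ L then L else ext ((L \ B) ∪ {v}) with hf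
  have hsepA : ∀ L, IsLattice L → v ∉ L → sep ((L \ B) ∪ {v}) := by
    intro L hL hv
    have hsepL := ((hLat' L).1 hL).1
    intro x hx y hy hxy
    simp only [Finset.mem_union, Finset.mem_sdiff, Finset.mem_singleton] at hx hy
    rcases hx with hx | rfl
    · rcases hy with hy | rfl
      · exact hsepL x hx.1 y hy.1 hxy
      · have h2 : ¬ dist y x < 1 := by
          intro h; exact hx.2 (by simp [hB, h])
        rw [dist_comm]; linarith [not_lt.mp h2]
    · rcases hy with hy | rfl
      · have h2 : ¬ dist x y < 1 := by
          intro h; exact hy.2 (by simp [hB, h])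
        linarith [not_lt.mp h2]
      · exact absurd rfl hxy
  have hfLat : ∀ L, IsLattice L → IsLattice (f L) ∧ v ∈ f L := by
    intro L hL
    simp only [hf]
    by_cases hv : v ∈ L
    · rw [if_pos hv]; exact ⟨hL, hv⟩
    · simp only [hv, if_false]
      obtain ⟨hsub, hlat⟩ := hext _ (hsepA L hL hv)
      exact ⟨hlat, hsub (by simp)⟩
  have hSempty : ∀ L, IsLattice L → v ∈ L → L ∩ N = ∅ := by
    intro L hL hv
    have hsepL := ((hLat' L).1 hL).1
    ext z
    simp only [Finset.mem_inter, hN, Finset.mem_erase, hB, Finset.mem_filter,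
      Finset.mem_univ, true_and, Finset.notMem_empty, iff_false, not_and]
    rintro hzL hzv hzd
    have := hsepL v hv z hzL (Ne.symm hzv)
    linarith
  have hSne : ∀ L, IsLattice L → v ∉ L → L ∩ N ≠ ∅ := by
    intro L hL hv hEq
    have hsepL := ((hLat' L).1 hL).1
    have hmax := ((hLat' L).1 hL).2
    have hfar : ∀ y ∈ L, 1 ≤ dist v y := by
      intro y hy
      by_contra h
      have hyN : y ∈ L ∩ N := by
        refine Finset.mem_inter.mpr ⟨hy, ?_⟩
        rw [hN]
        refine Finset.mem_erase.mpr ⟨fun hyv => hv (hyv ▸ hy), ?_⟩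
        simp [hB]; linarith
      rw [hEq] at hyN
      exact absurd hyN (Finset.notMem_empty y)
    have hsep' : sep (insert v L) := by
      intro x hx y hy hxy
      simp only [Finset.mem_insert] at hx hy
      rcases hx with rfl | hx
      · rcases hy with rfl | hy
        · exact absurd rfl hxy
        · exact hfar y hy
      · rcases hy with rfl | hy
        · rw [dist_comm]; exact hfar x hx
        · exact hsepL x hx y hy hxy
    have := hmax (insert v L) (Finset.subset_insert _ _) hsep'
    exact hv (this ▸ Finset.mem_insert_self v L)
  have hrecov : ∀ L, IsLattice L → v ∉ L →
      L = ((f L).filter fun u => u ≠ v ∧ ∀ s ∈ L ∩ N, 1 ≤ dist s u) ∪ (L ∩ N) := by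
    intro L hL hv
    obtain ⟨hML, hvM⟩ := hfLat L hL
    have hsepL := ((hLat' L).1 hL).1
    have hmaxL := ((hLat' L).1 hL).2
    have hsepM := ((hLat' (f L)).1 hML).1
    have hAM : (L \ B) ∪ {v} ⊆ f L := by
      rw [hf]; simp only [hv, if_false]; exact (hext _ (hsepA L hL hv)).1
    ext x
    simp only [Finset.mem_union, Finset.mem_filter]
    constructor
    · intro hxL
      have hxv : x ≠ v := fun h => hv (h ▸ hxL)
      by_cases hxB : x ∈ B
      · exact Or.inr (Finset.mem_inter.mpr ⟨hxL, Finset.mem_erase.mpr ⟨hxv, hxB⟩⟩)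
      · refine Or.inl ⟨hAM (Finset.mem_union_left _ (Finset.mem_sdiff.mpr ⟨hxL, hxB⟩)), hxv, ?_⟩
        intro s hs
        have hsL := (Finset.mem_inter.mp hs).1
        have hsN := (Finset.mem_inter.mp hs).2
        have hsx : s ≠ x := by
          rintro rfl
          exact hxB (Finset.mem_of_mem_erase hsN)
        exact hsepL s hsL x hxL hsx
    · rintro (⟨hxM, hxv, hxfar⟩ | hxS)
      · by_contra hxL
        have hfarL : ∀ b ∈ L, 1 ≤ dist b x := by
          intro b hb
          by_cases hbB : b ∈ B
          · have hbv : b ≠ v := fun h => hv (h ▸ hb)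
            exact hxfar b (Finset.mem_inter.mpr ⟨hb, Finset.mem_erase.mpr ⟨hbv, hbB⟩⟩)
          · have hbM : b ∈ f L := hAM (Finset.mem_union_left _ (Finset.mem_sdiff.mpr ⟨hb, hbB⟩))
            have hbx : b ≠ x := fun h => hxL (h ▸ hb)
            exact hsepM b hbM x hxM hbx
        have hsep' : sep (insert x L) := by
          intro a ha b hb hab
          simp only [Finset.mem_insert] at ha hb
          rcases ha with rfl | ha
          · rcases hb with rfl | hb
            · exact absurd rfl hab
            · rw [dist_comm]; exact hfarL b hb
          · rcases hb with rfl | hb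
            · exact hfarL a ha
            · exact hsepL a ha b hb hab
        have := hmaxL (insert x L) (Finset.subset_insert _ _) hsep'
        exact hxL (this ▸ Finset.mem_insert_self x L)
      · exact (Finset.mem_inter.mp hxS).1
  set G : Finset Y → Finset Y × Finset Y := fun L => (f L, L ∩ N) with hG
  have hinj : Set.InjOn G (Finset.univ.filter fun L : Finset Y => IsLattice L) := by
    intro L₁ h1 L₂ h2 hEq
    simp only [Finset.coe_filter, Set.mem_setOf_eq, Finset.mem_univ, true_and] at h1 h2
    have hf12 : f L₁ = f L₂ := congrArg Prod.fst hEq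
    have hS12 : L₁ ∩ N = L₂ ∩ N := congrArg Prod.snd hEq
    by_cases hv1 : v ∈ L₁
    · have hS1 := hSempty L₁ h1 hv1
      have hv2 : v ∈ L₂ := by
        by_contra hv2
        exact hSne L₂ h2 hv2 (hS12 ▸ hS1)
      have e1 : f L₁ = L₁ := by rw [hf]; simp [hv1]
      have e2 : f L₂ = L₂ := by rw [hf]; simp [hv2]
      rw [← e1, ← e2, hf12]
    · have hv2 : v ∉ L₂ := by
        intro hv2
        exact hSne L₁ h1 hv1 (hS12.trans (hSempty L₂ h2 hv2))
      rw [hrecov L₁ h1 hv1, hrecov L₂ h2 hv2, hf12, hS12]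
  have himg : ∀ L ∈ Finset.univ.filter fun L : Finset Y => IsLattice L,
      G L ∈ (Finset.univ.filter fun L : Finset Y => IsLattice L ∧ v ∈ L) ×ˢ N.powerset := by
    intro L hLmem
    simp only [Finset.mem_filter, Finset.mem_univ, true_and] at hLmem
    simp only [hG, Finset.mem_product, Finset.mem_filter, Finset.mem_univ, true_and,
      Finset.mem_powerset]
    exact ⟨hfLat L hLmem, Finset.inter_subset_right⟩
  calc (Finset.univ.filter fun L : Finset Y => IsLattice L).card
      ≤ ((Finset.univ.filter fun L : Finset Y => IsLattice L ∧ v ∈ L) ×ˢ N.powerset).card :=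
        Finset.card_le_card_of_injOn G himg hinj
    _ = (Finset.univ.filter fun L : Finset Y => IsLattice L ∧ v ∈ L).card * 2 ^ N.card := by
        rw [Finset.card_product, Finset.card_powerset]
    _ ≤ (Finset.univ.filter fun L : Finset Y => IsLattice L ∧ v ∈ L).card * 2 ^ (d - 1) :=
        Nat.mul_le_mul_left _ (Nat.pow_le_pow_right (by norm_num) hNcard)
    _ = 2 ^ (d - 1) * (Finset.univ.filter fun L : Finset Y => IsLattice L ∧ v ∈ L).card :=
        mul_comm _ _
end

section
/- Let Y be a finite metric space, v ∈ Y, and S a subset of B(v,1)∖{v} (the open unit ball around v minus v). Let W_S be the set of 1-lattices in which v is not in the lattice, all elements of S are in the lattice, and all other elements of B(v,1) are not in the lattice. Let B be the set of 1-lattices containing v. Then card(W_S) ≤ card(B); i.e., there is an injection from W_S into B. -/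
open Classical

/-!
Removing `S` from a lattice `L ∈ W_S` and adding `v` keeps it 1-separated, because `L` meets
`B(v,1)` only in `S`; extend the result to a lattice `M ∋ v`. Then `L` is recovered from `M` as
`S` together with the points `m ≠ v` of `M` at distance `≥ 1` from all of `S`: such an `m` can be
added to `L` without breaking separation, so it lies in `L` by maximality. Hence the recovery map
`restore` sends the lattices containing `v` onto `W_S`.
-/

namespace Finset

variable {α : Type*} [DecidableEq α] {r : α → α → Prop} {v : α} {S L M : Finset α}

def restore (r : α → α → Prop) [DecidableRel r] (v : α) (S M : Finset α) : Finset α :=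
  S ∪ M.filter fun m => m ≠ v ∧ ∀ s ∈ S, r m s

theorem pairwise_insert_sdiff [Std.Symm r] (hL : (L : Set α).Pairwise r)
    (hv : ∀ y ∈ L \ S, r v y) : ((insert v (L \ S) : Finset α) : Set α).Pairwise r := by
  rw [coe_insert, coe_sdiff]
  exact (hL.mono Set.sdiff_subset).insert_of_symm fun y hy _ => hv y (by simpa using hy)

theorem restore_eq [DecidableRel r] [Std.Symm r]
    (hL : Maximal (fun T : Finset α => (T : Set α).Pairwise r) L) (hvL : v ∉ L) (hSL : S ⊆ L)
    (hM : (M : Set α).Pairwise r) (hLM : insert v (L \ S) ⊆ M) :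
    restore r v S M = L := by
  ext x
  simp only [restore, mem_union, mem_filter]
  constructor
  · rintro (hxS | ⟨hxM, hxv, hxS⟩)
    · exact hSL hxS
    by_contra hxL
    have hsep : ((insert x L : Finset α) : Set α).Pairwise r := by
      rw [coe_insert]
      refine hL.prop.insert_of_symm fun y hyL hxy => ?_
      by_cases hyS : y ∈ S
      · exact hxS y hyS
      exact hM hxM (hLM (mem_insert_of_mem (mem_sdiff.2 ⟨hyL, hyS⟩))) hxy
    exact hxL (hL.eq_of_le hsep (subset_insert x L) ▸ mem_insert_self x L)
  · intro hxL
    by_cases hxS : x ∈ S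
    · exact Or.inl hxS
    refine Or.inr ⟨hLM (mem_insert_of_mem (mem_sdiff.2 ⟨hxL, hxS⟩)),
      ne_of_mem_of_not_mem hxL hvL, fun s hs => ?_⟩
    exact hL.prop hxL (hSL hs) (ne_of_mem_of_not_mem hs hxS).symm

theorem exists_maximal_mem_restore_eq [Finite α] [DecidableRel r] [Std.Symm r]
    (hL : Maximal (fun T : Finset α => (T : Set α).Pairwise r) L) (hvL : v ∉ L) (hSL : S ⊆ L)
    (hv : ∀ y ∈ L \ S, r v y) :
    ∃ M, Maximal (fun T : Finset α => (T : Set α).Pairwise r) M ∧ v ∈ M ∧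
      restore r v S M = L := by
  obtain ⟨M, hLM, hM⟩ := _root_.Finite.exists_le_maximal
    (p := fun T : Finset α => (T : Set α).Pairwise r) (pairwise_insert_sdiff hL.prop hv)
  exact ⟨M, hM, hLM (mem_insert_self v _), restore_eq hL hvL hSL hM.prop hLM⟩

end Finset

theorem recoloring_injection_general
    (Y : Type*) [MetricSpace Y] [Fintype Y]
    (IsLattice : Finset Y → Prop)
    (hLat : ∀ L : Finset Y, IsLattice L ↔
      ((∀ x ∈ L, ∀ y ∈ L, x ≠ y → 1 ≤ dist x y) ∧
        ∀ L' : Finset Y, L ⊆ L' → (∀ x ∈ L', ∀ y ∈ L', x ≠ y → 1 ≤ dist x y) → L' = L))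
    (v : Y) (S : Finset Y) :
    (Finset.univ.filter fun L : Finset Y =>
        IsLattice L ∧ v ∉ L ∧ (∀ y ∈ S, y ∈ L) ∧
          ∀ y : Y, dist v y < 1 → y ∉ S → y ∉ L).card
      ≤ (Finset.univ.filter fun L : Finset Y => IsLattice L ∧ v ∈ L).card := by
  let far : Y → Y → Prop := fun x y => 1 ≤ dist x y
  have : Std.Symm far := ⟨fun x y h => by simpa only [far, dist_comm] using h⟩
  have hLat' : ∀ L, IsLattice L ↔ Maximal (fun T : Finset Y => (T : Set Y).Pairwise far) L :=
    fun L => by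
      rw [hLat, maximal_iff]
      exact and_congr Iff.rfl
        ⟨fun h T hT hLT => (h T hLT hT).symm, fun h T hLT hT => (h hT hLT).symm⟩
  refine Finset.card_le_card_of_surjOn (Finset.restore far v S) fun L hL => ?_
  simp only [Finset.coe_filter, Finset.mem_univ, true_and, Set.mem_ofPred_eq, hLat'] at hL ⊢
  obtain ⟨hL, hvL, hSL, hball⟩ := hL
  have hv : ∀ y ∈ L \ S, far v y := fun y hy =>
    not_lt.1 fun h => hball y h (Finset.mem_sdiff.1 hy).2 (Finset.mem_sdiff.1 hy).1
  obtain ⟨M, hM, hvM, hML⟩ := Finset.exists_maximal_mem_restore_eq hL hvL hSL hv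
  exact ⟨M, ⟨hM, hvM⟩, hML⟩

/-- the recoloring injection. For a finite metric space `Y`, `v ∈ Y`
and `S ⊆ B(v,1) \ {v}`, the number of 1-lattices in which `v` is green, `S` is red
and the rest of `B(v,1)` is green is at most the number of 1-lattices containing `v`. -/
theorem recoloring_injection
    (Y : Type*) [MetricSpace Y] [Fintype Y]
    (IsLattice : Finset Y → Prop)
    (hLat : ∀ L : Finset Y, IsLattice L ↔
      ((∀ x ∈ L, ∀ y ∈ L, x ≠ y → 1 ≤ dist x y) ∧
        ∀ L' : Finset Y, L ⊆ L' → (∀ x ∈ L', ∀ y ∈ L', x ≠ y → 1 ≤ dist x y) → L' = L))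
    (v : Y) (S : Finset Y)
    (hS : ∀ y ∈ S, dist v y < 1 ∧ y ≠ v) :
    (Finset.univ.filter fun L : Finset Y =>
        IsLattice L ∧ v ∉ L ∧ (∀ y ∈ S, y ∈ L) ∧
          ∀ y : Y, dist v y < 1 → y ∉ S → y ∉ L).card
      ≤ (Finset.univ.filter fun L : Finset Y => IsLattice L ∧ v ∈ L).card :=
  recoloring_injection_general Y IsLattice hLat v S
end

section
/- Let 0 < α < 1/2 and B(x,y) = x^α y^α. Let a, b_1, …, b_M be points in the first quadrant with xy ≥ 1 at each point, and suppose a = Σ_i λ_i b_i with λ_i ≥ c_1 > 0, Σ λ_i = 1, and suppose that for each i and each t ∈ [0, 1/2], the point (1−t)a + t b_i has first coordinate ≥ (1/2)a_1 and ≤ C a_1 and second coordinate ≥ (1/2)a_2 and ≤ C a_2. Then B(a) − Σ_i λ_i B(b_i) ≥ c(α, C, c_1) · (a_1 a_2)^α · Σ_i λ_i ( (b_{i,1} − a_1)²/a_1² + (b_{i,2} − a_2)²/a_2² ). -/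
/-! By homogeneity `B(b) = B(a) · B(b₁/a₁, b₂/a₂)`, and the constraint at `t = 1/2` gives
`bⱼ/aⱼ ≤ 2C - 1`. On `(0, T]` the second derivative of `s ^ β` (`0 < β < 1`) is at most
`-β(1-β)T^(β-2)`, so `s ^ β` lies below its tangent at `1` by `β(1-β)T^(β-2)(s-1)²/2`.
Taking `β = 2α` and `x^α y^α ≤ (x^(2α) + y^(2α))/2` bounds `B(x, y)` by its tangent plane at
`(1, 1)` minus a multiple of `(x-1)² + (y-1)²`. Averaging with the weights `λᵢ` kills the linear
terms because `a = ∑ λᵢ bᵢ`. -/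

open Real Set

lemma ConcaveOn.le_add_mul_sub_of_hasDerivAt {S : Set ℝ} {f : ℝ → ℝ} {x y f' : ℝ}
    (hf : ConcaveOn ℝ S f) (hx : x ∈ S) (hy : y ∈ S) (hf' : HasDerivAt f f' x) :
    f y ≤ f x + f' * (y - x) := by
  rcases lt_trichotomy x y with hxy | rfl | hyx
  · have := hf.slope_le_of_hasDerivAt hx hy hxy hf'
    rw [slope_def_field, div_le_iff₀ (sub_pos.2 hxy)] at this
    linarith
  · simp
  · have := hf.le_slope_of_hasDerivAt hy hx hyx hf'
    rw [slope_def_field, le_div_iff₀ (sub_pos.2 hyx)] at this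
    linarith

lemma hasDerivAt_rpow_add_mul_sub_one_sq {β c s : ℝ} (hs : 0 < s) :
    HasDerivAt (fun s ↦ s ^ β + c / 2 * (s - 1) ^ 2) (β * s ^ (β - 1) + c * (s - 1)) s := by
  refine ((hasDerivAt_rpow_const (Or.inl hs.ne')).add
    ((((hasDerivAt_id s).sub_const 1).pow 2).const_mul (c / 2))).congr_deriv ?_
  simp only [id_eq, Nat.cast_ofNat]
  ring

lemma concaveOn_rpow_add_mul_sub_one_sq {β T : ℝ} (hβ0 : 0 < β) (hβ1 : β < 1) :
    ConcaveOn ℝ (Ioc 0 T)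
      (fun s ↦ s ^ β + β * (1 - β) * T ^ (β - 2) / 2 * (s - 1) ^ 2) := by
  set m := β * (1 - β) * T ^ (β - 2)
  have hderiv2 (s : ℝ) (hs : 0 < s) : HasDerivAt (fun s ↦ β * s ^ (β - 1) + m * (s - 1))
      (β * (β - 1) * s ^ (β - 2) + m) s := by
    refine (((hasDerivAt_rpow_const (Or.inl hs.ne')).const_mul β).add
      (((hasDerivAt_id s).sub_const 1).const_mul m)).congr_deriv ?_
    rw [show β - 1 - 1 = β - 2 by ring]
    ring
  refine concaveOn_of_hasDerivWithinAt2_nonpos (convex_Ioc 0 T)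
    (fun s hs ↦ (hasDerivAt_rpow_add_mul_sub_one_sq hs.1).continuousAt.continuousWithinAt)
    (f' := fun s ↦ β * s ^ (β - 1) + m * (s - 1)) (f'' := fun s ↦ β * (β - 1) * s ^ (β - 2) + m)
    ?_ ?_ ?_ <;> rw [interior_Ioc]
  · exact fun s hs ↦ (hasDerivAt_rpow_add_mul_sub_one_sq hs.1).hasDerivWithinAt
  · exact fun s hs ↦ (hderiv2 s hs.1).hasDerivWithinAt
  · intro s ⟨hs0, hsT⟩
    have : T ^ (β - 2) ≤ s ^ (β - 2) := rpow_le_rpow_of_nonpos hs0 hsT.le (by linarith)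
    have : 0 ≤ β * (1 - β) := by nlinarith
    nlinarith

lemma rpow_le_one_add_mul_sub_one_sub_sq {β T s : ℝ} (hβ0 : 0 < β) (hβ1 : β < 1) (hT : 1 ≤ T)
    (hs0 : 0 < s) (hsT : s ≤ T) :
    s ^ β ≤ 1 + β * (s - 1) - β * (1 - β) * T ^ (β - 2) / 2 * (s - 1) ^ 2 := by
  have := (concaveOn_rpow_add_mul_sub_one_sq (T := T) hβ0 hβ1).le_add_mul_sub_of_hasDerivAt
    ⟨one_pos, hT⟩ ⟨hs0, hsT⟩ (hasDerivAt_rpow_add_mul_sub_one_sq one_pos)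
  simp only [one_rpow, sub_self, mul_zero, add_zero, ne_eq, OfNat.ofNat_ne_zero,
    not_false_eq_true, zero_pow, mul_one] at this
  linarith

lemma rpow_mul_rpow_le {α T x y : ℝ} (hα0 : 0 < α) (hα : α < 1 / 2) (hT : 1 ≤ T)
    (hx0 : 0 < x) (hy0 : 0 < y) (hxT : x ≤ T) (hyT : y ≤ T) :
    x ^ α * y ^ α ≤ 1 + α * ((x - 1) + (y - 1))
      - α * (1 - 2 * α) * T ^ (2 * α - 2) / 2 * ((x - 1) ^ 2 + (y - 1) ^ 2) := by
  have hsq {s : ℝ} (hs : 0 < s) : s ^ (2 * α) = (s ^ α) ^ 2 := by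
    rw [mul_comm, rpow_mul hs.le, rpow_two]
  have hβ0 : 0 < 2 * α := by linarith
  have hβ1 : 2 * α < 1 := by linarith
  have hx := rpow_le_one_add_mul_sub_one_sub_sq hβ0 hβ1 hT hx0 hxT
  have hy := rpow_le_one_add_mul_sub_one_sub_sq hβ0 hβ1 hT hy0 hyT
  rw [hsq hx0] at hx
  rw [hsq hy0] at hy
  nlinarith [sq_nonneg (x ^ α - y ^ α)]

lemma rpow_mul_rpow_le_of_le_mul {α T a₁ a₂ b₁ b₂ : ℝ} (hα0 : 0 < α) (hα : α < 1 / 2)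
    (hT : 1 ≤ T) (ha₁ : 0 < a₁) (ha₂ : 0 < a₂) (hb₁ : 0 < b₁) (hb₂ : 0 < b₂)
    (hb₁T : b₁ ≤ T * a₁) (hb₂T : b₂ ≤ T * a₂) :
    b₁ ^ α * b₂ ^ α ≤ (a₁ * a₂) ^ α * (1 + α * ((b₁ - a₁) / a₁ + (b₂ - a₂) / a₂)
      - α * (1 - 2 * α) * T ^ (2 * α - 2) / 2
        * ((b₁ - a₁) ^ 2 / a₁ ^ 2 + (b₂ - a₂) ^ 2 / a₂ ^ 2)) := by
  have h := rpow_mul_rpow_le hα0 hα hT (div_pos hb₁ ha₁) (div_pos hb₂ ha₂)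
    ((div_le_iff₀ ha₁).2 hb₁T) ((div_le_iff₀ ha₂).2 hb₂T)
  rw [div_sub_one ha₁.ne', div_sub_one ha₂.ne', div_pow, div_pow] at h
  calc b₁ ^ α * b₂ ^ α = (a₁ * a₂) ^ α * ((b₁ / a₁) ^ α * (b₂ / a₂) ^ α) := by
        rw [div_rpow hb₁.le ha₁.le, div_rpow hb₂.le ha₂.le, mul_rpow ha₁.le ha₂.le]
        field_simp
    _ ≤ _ := mul_le_mul_of_nonneg_left h (by positivity)

lemma Finset.sum_mul_sub_div_eq_zero {ι : Type*} {s : Finset ι} {w f : ι → ℝ} {c : ℝ}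
    (hw : ∑ i ∈ s, w i = 1) (hc : c = ∑ i ∈ s, w i * f i) :
    ∑ i ∈ s, w i * ((f i - c) / c) = 0 := by
  simp_rw [← mul_div_assoc, ← Finset.sum_div, mul_sub, Finset.sum_sub_distrib, ← Finset.sum_mul,
    hw, ← hc, one_mul, sub_self, zero_div]

/-- key convexity step for `B(x,y) = x^α y^α`: the concavity defect
at a convex combination dominates the normalized quadratic deviation. -/
theorem bellman_convexity_step
    (α C c₁ : ℝ) (hα0 : 0 < α) (hα : α < 1 / 2) (hC : 1 ≤ C) (hc₁ : 0 < c₁) :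
    ∃ c : ℝ, 0 < c ∧
      ∀ (M : ℕ) (a : ℝ × ℝ) (b : Fin M → ℝ × ℝ) (lam : Fin M → ℝ),
        (0 < a.1 ∧ 0 < a.2 ∧ 1 ≤ a.1 * a.2) →
        (∀ i, 0 < (b i).1 ∧ 0 < (b i).2 ∧ 1 ≤ (b i).1 * (b i).2) →
        (∀ i, c₁ ≤ lam i) → (∑ i, lam i = 1) →
        (a.1 = ∑ i, lam i * (b i).1) → (a.2 = ∑ i, lam i * (b i).2) →
        (∀ i, ∀ t : ℝ, 0 ≤ t → t ≤ 1 / 2 →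
          a.1 / 2 ≤ (1 - t) * a.1 + t * (b i).1 ∧
          (1 - t) * a.1 + t * (b i).1 ≤ C * a.1 ∧
          a.2 / 2 ≤ (1 - t) * a.2 + t * (b i).2 ∧
          (1 - t) * a.2 + t * (b i).2 ≤ C * a.2) →
        a.1 ^ α * a.2 ^ α - ∑ i, lam i * ((b i).1 ^ α * (b i).2 ^ α)
          ≥ c * (a.1 * a.2) ^ α *
              ∑ i, lam i * (((b i).1 - a.1) ^ 2 / a.1 ^ 2
                + ((b i).2 - a.2) ^ 2 / a.2 ^ 2) := by
  set κ := α * (1 - 2 * α) * (2 * C - 1) ^ (2 * α - 2) / 2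
  have h1α : 0 < 1 - 2 * α := by linarith
  have hT : 1 ≤ 2 * C - 1 := by linarith
  refine ⟨κ, by positivity, ?_⟩
  rintro M a b lam ⟨ha₁, ha₂, -⟩ hb hlam hsum ha₁_eq ha₂_eq hseg
  set A := (a.1 * a.2) ^ α
  set p := fun i ↦ ((b i).1 - a.1) / a.1
  set q := fun i ↦ ((b i).2 - a.2) / a.2
  set r := fun i ↦ ((b i).1 - a.1) ^ 2 / a.1 ^ 2 + ((b i).2 - a.2) ^ 2 / a.2 ^ 2
  have hpoint (i : Fin M) : (b i).1 ^ α * (b i).2 ^ α ≤ A * (1 + α * (p i + q i) - κ * r i) := by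
    obtain ⟨-, hb₁, -, hb₂⟩ := hseg i (1 / 2) (by norm_num) le_rfl
    exact rpow_mul_rpow_le_of_le_mul hα0 hα hT ha₁ ha₂ (hb i).1 (hb i).2.1
      (by linarith) (by linarith)
  have hp : ∑ i, lam i * p i = 0 := Finset.sum_mul_sub_div_eq_zero hsum ha₁_eq
  have hq : ∑ i, lam i * q i = 0 := Finset.sum_mul_sub_div_eq_zero hsum ha₂_eq
  have hsum_le : ∑ i, lam i * ((b i).1 ^ α * (b i).2 ^ α)
      ≤ A * (∑ i, lam i + α * (∑ i, lam i * p i + ∑ i, lam i * q i) - κ * ∑ i, lam i * r i) := by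
    calc _ ≤ ∑ i, lam i * (A * (1 + α * (p i + q i) - κ * r i)) :=
          Finset.sum_le_sum fun i _ ↦ mul_le_mul_of_nonneg_left (hpoint i) (hc₁.le.trans (hlam i))
      _ = _ := by
        simp only [mul_add, mul_sub, Finset.mul_sum, ← Finset.sum_add_distrib,
          ← Finset.sum_sub_distrib]
        exact Finset.sum_congr rfl fun i _ ↦ by ring
  rw [hp, hq, hsum] at hsum_le
  rw [← mul_rpow ha₁.le ha₂.le]
  linarith
end
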